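/- arXiv:2510.20763 — 2 statements merged into one kernel-verified Lean document; each statement's English description precedes it below -/
import Mathlib

section
/- Let ζ ∈ ℝ with ζ ≠ β and define u(t) = f(t;ζ)^γ for t ∈ [0,T]. Then u is differentiable, strictly positive, u(T) = 1, and u satisfies the nonlinear ODE 0 = u'(t) + ζ·u(t) + γ·exp(−(β/γ)t)·u(t)^{1−1/γ} for all t ∈ [0,T]. -/
/-!
`f` is the variation-of-constants solution of the linear equation
`f' = -(ζ/γ) f - exp(-(β/γ) t)` with `f T = 1`, and it is positive for `t ≤ T` because
`(exp (c T) - exp (c t)) / c ≥ 0` whatever the sign of `c = (ζ - β)/γ`. The substitution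
`u = f ^ γ` turns the linear equation into the nonlinear one, since `u ^ (1 - 1/γ) = f ^ (γ - 1)`.
-/

open Real

noncomputable def profile (γ β T ζ t : ℝ) : ℝ :=
  exp ((ζ / γ) * (T - t)) +
    (γ / (ζ - β)) * exp (-(ζ / γ) * t) * (exp (((ζ - β) / γ) * T) - exp (((ζ - β) / γ) * t))

lemma exp_mul_sub_exp_mul_div_nonneg (c : ℝ) {a b : ℝ} (hab : a ≤ b) :
    0 ≤ (exp (c * b) - exp (c * a)) / c := by
  rcases le_total c 0 with hc | hc
  · refine div_nonneg_of_nonpos (sub_nonpos.mpr ?_) hc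
    exact exp_le_exp.mpr (mul_le_mul_of_nonpos_left hab hc)
  · refine div_nonneg (sub_nonneg.mpr ?_) hc
    exact exp_le_exp.mpr (mul_le_mul_of_nonneg_left hab hc)

section Profile

variable (γ β T ζ : ℝ)

lemma profile_self : profile γ β T ζ T = 1 := by
  simp [profile]

lemma profile_pos {t : ℝ} (ht : t ≤ T) : 0 < profile γ β T ζ t := by
  have hsecond : (γ / (ζ - β)) * exp (-(ζ / γ) * t) *
        (exp (((ζ - β) / γ) * T) - exp (((ζ - β) / γ) * t)) =
      exp (-(ζ / γ) * t) * ((exp (((ζ - β) / γ) * T) - exp (((ζ - β) / γ) * t)) / ((ζ - β) / γ)) := by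
    rw [div_eq_mul_inv _ ((ζ - β) / γ), inv_div]
    ring
  rw [profile, hsecond]
  have := exp_mul_sub_exp_mul_div_nonneg ((ζ - β) / γ) ht
  positivity

lemma hasDerivAt_profile (hγ : γ ≠ 0) (hζ : ζ ≠ β) (t : ℝ) :
    HasDerivAt (profile γ β T ζ) (-(ζ / γ) * profile γ β T ζ t - exp (-(β / γ) * t)) t := by
  have hgrowth := (((hasDerivAt_id t).const_sub T).const_mul (ζ / γ)).exp
  have hdecay := ((hasDerivAt_id t).const_mul (-(ζ / γ))).exp
  have hgap := (hasDerivAt_const t (exp (((ζ - β) / γ) * T))).sub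
    ((hasDerivAt_id t).const_mul ((ζ - β) / γ)).exp
  refine HasDerivAt.congr_deriv
    (show HasDerivAt (profile γ β T ζ) _ t from
      hgrowth.add ((hdecay.const_mul (γ / (ζ - β))).mul hgap)) ?_
  have hexp : exp (-(ζ / γ) * t) * exp (((ζ - β) / γ) * t) = exp (-(β / γ) * t) := by
    rw [← exp_add]
    congr 1
    field_simp
    ring
  simp only [profile, id]
  field_simp
  linear_combination (norm := ring_nf) -(γ * (ζ - β)) * hexp

end Profile

lemma rpow_rpow_one_sub_inv {x γ : ℝ} (hx : 0 ≤ x) (hγ : γ ≠ 0) :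
    (x ^ γ) ^ (1 - 1 / γ) = x ^ (γ - 1) := by
  rw [← rpow_mul hx]
  congr 1
  field_simp

lemma HasDerivAt.rpow_of_linear {f : ℝ → ℝ} {a e γ t : ℝ}
    (hf : HasDerivAt f (-a * f t - e) t) (hpos : 0 < f t) (hγ : γ ≠ 0) :
    HasDerivAt (fun s => f s ^ γ)
      (-(γ * a) * f t ^ γ - γ * e * (f t ^ γ) ^ (1 - 1 / γ)) t := by
  convert hf.rpow_const (p := γ) (Or.inl hpos.ne') using 1
  have hsplit : f t ^ γ = f t * f t ^ (γ - 1) := by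
    conv_lhs => rw [← sub_add_cancel γ 1, rpow_add_one hpos.ne']
    ring
  rw [rpow_rpow_one_sub_inv hpos.le hγ, hsplit]
  ring

theorem stmt2_general (γ β T : ℝ) (hγ : 0 < γ)
    (ζ : ℝ) (hζ : ζ ≠ β) (f : ℝ → ℝ)
    (hf : ∀ t : ℝ, f t =
      Real.exp ((ζ / γ) * (T - t)) +
        (γ / (ζ - β)) * Real.exp (-(ζ / γ) * t) *
          (Real.exp (((ζ - β) / γ) * T) - Real.exp (((ζ - β) / γ) * t)))
    (u : ℝ → ℝ) (hu : ∀ t : ℝ, u t = f t ^ γ) :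
    u T = 1 ∧
      ∀ t ∈ Set.Icc (0 : ℝ) T,
        0 < u t ∧
        HasDerivAt u (-(ζ * u t) - γ * Real.exp (-(β / γ) * t) * u t ^ (1 - 1 / γ)) t := by
  obtain rfl : f = profile γ β T ζ := funext hf
  obtain rfl : u = fun s => profile γ β T ζ s ^ γ := funext hu
  refine ⟨by simp [profile_self], fun t ht => ?_⟩
  have hpos := profile_pos γ β T ζ ht.2
  refine ⟨rpow_pos_of_pos hpos γ, ?_⟩
  convert (hasDerivAt_profile γ β T ζ hγ.ne' hζ t).rpow_of_linear hpos hγ.ne' using 1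
  field_simp

/-- Fix `γ > 0`, `β > 0`, `T > 0` and `ζ ≠ β`, let
`f(t;ζ) = exp((ζ/γ)(T−t)) + (γ/(ζ−β))·exp(−(ζ/γ)t)·(exp(((ζ−β)/γ)T) − exp(((ζ−β)/γ)t))`,
and set `u(t) = f(t;ζ)^γ`.  Then `u` is differentiable and strictly positive on `[0,T]`,
`u(T) = 1`, and `0 = u'(t) + ζ·u(t) + γ·exp(−(β/γ)t)·u(t)^{1−1/γ}` for all `t ∈ [0,T]`. -/
theorem stmt2 (γ β T : ℝ) (hγ : 0 < γ) (hβ : 0 < β) (hT : 0 < T)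
    (ζ : ℝ) (hζ : ζ ≠ β) (f : ℝ → ℝ)
    (hf : ∀ t : ℝ, f t =
      Real.exp ((ζ / γ) * (T - t)) +
        (γ / (ζ - β)) * Real.exp (-(ζ / γ) * t) *
          (Real.exp (((ζ - β) / γ) * T) - Real.exp (((ζ - β) / γ) * t)))
    (u : ℝ → ℝ) (hu : ∀ t : ℝ, u t = f t ^ γ) :
    u T = 1 ∧
      ∀ t ∈ Set.Icc (0 : ℝ) T,
        0 < u t ∧
        HasDerivAt u (-(ζ * u t) - γ * Real.exp (-(β / γ) * t) * u t ^ (1 - 1 / γ)) t :=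
  stmt2_general γ β T hγ ζ hζ f hf u hu
end

section
/- Define v(t,w) = f(t;ν)^γ · w^{1−γ}/(1−γ) on [0,T]×(0,∞). Then v(T,w) = w^{1−γ}/(1−γ) for all w > 0, and for every (t,w) ∈ [0,T)×(0,∞): 0 = ∂_t v(t,w) + sup over (π,c) ∈ ℝ^d×(0,∞) of [ w·∂_w v(t,w)·(r + π^⊤(μ̃ − r·1_d)) + (w²/2)·∂_{ww}v(t,w)·π^⊤ã π − c·∂_w v(t,w) + e^{−βt}·c^{1−γ}/(1−γ) ]. Moreover this supremum is attained at the unique maximizer π* = (1/γ)·ã^{−1}(μ̃ − r·1_d), c* = e^{−(β/γ)t}·w/f(t;ν). -/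
/-!
The function `f = mertonScale γ β T ν` solves the linear ODE `f' = -(ν/γ) f - e^{-(β/γ) t}` with
`f(T) = 1`, and it is positive on `(-∞, T]`. For `v = f^γ w^{1-γ}/(1-γ)` the Hamiltonian splits as
`B (r + π·m - (γ/2) π·ãπ) + e^{-βt} (c^{1-γ}/(1-γ) - c c*^{-γ})` with `m = μ̃ - r 1_d` and
`B = f^γ w^{1-γ} > 0`, because `c*` is chosen so that `e^{-βt} c*^{-γ} = ∂_w v`. Completing the
square in `π` and Bernoulli's inequality in `c` show that `(π*, c*)` is the strict maximizer, and at
this point the ODE for `f` makes the HJB residual vanish.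
-/

open Matrix

section MertonScale

open Real

lemma inv_mul_exp_sub_exp_nonneg (c : ℝ) {s t : ℝ} (hst : s ≤ t) :
    0 ≤ c⁻¹ * (exp (c * t) - exp (c * s)) := by
  rcases lt_trichotomy c 0 with hc | rfl | hc
  · exact mul_nonneg_of_nonpos_of_nonpos (inv_nonpos.2 hc.le)
      (sub_nonpos.2 (exp_le_exp.2 (mul_le_mul_of_nonpos_left hst hc.le)))
  · simp
  · exact mul_nonneg (inv_nonneg.2 hc.le)
      (sub_nonneg.2 (exp_le_exp.2 (mul_le_mul_of_nonneg_left hst hc.le)))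

/-- The function `f(t; ν)` of the value function `v = f^γ w^{1-γ}/(1-γ)`. -/
noncomputable def mertonScale (γ β T ν t : ℝ) : ℝ :=
  Real.exp ((ν / γ) * (T - t)) +
    (γ / (ν - β)) * Real.exp (-(ν / γ) * t) *
      (Real.exp (((ν - β) / γ) * T) - Real.exp (((ν - β) / γ) * t))

variable {γ β T ν : ℝ}

lemma mertonScale_self : mertonScale γ β T ν T = 1 := by
  simp [mertonScale]

lemma mertonScale_pos {t : ℝ} (ht : t ≤ T) : 0 < mertonScale γ β T ν t := by
  have h := inv_mul_exp_sub_exp_nonneg ((ν - β) / γ) ht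
  rw [inv_div] at h
  rw [mertonScale, mul_right_comm]
  exact add_pos_of_pos_of_nonneg (exp_pos _) (mul_nonneg h (exp_pos _).le)

lemma hasDerivAt_mertonScale (hγ : γ ≠ 0) (hνβ : ν ≠ β) (t : ℝ) :
    HasDerivAt (mertonScale γ β T ν)
      (-(ν / γ) * mertonScale γ β T ν t - exp (-(β / γ) * t)) t := by
  have h := ((((hasDerivAt_id t).const_sub T).const_mul (ν / γ)).exp).add
    (((((hasDerivAt_id t).const_mul (-(ν / γ))).exp).const_mul (γ / (ν - β))).mul
      ((((hasDerivAt_id t).const_mul ((ν - β) / γ)).exp).const_sub (exp (((ν - β) / γ) * T))))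
  have hexp : exp (-(β / γ) * t) = exp (-(ν / γ) * t) * exp (((ν - β) / γ) * t) := by
    rw [← exp_add]; congr 1; field_simp; ring
  have hνβ' : ν - β ≠ 0 := sub_ne_zero.2 hνβ
  refine (h : HasDerivAt (mertonScale γ β T ν) _ t).congr_deriv ?_
  rw [mertonScale, hexp]
  simp only [id]
  field_simp
  ring

end MertonScale

section PowerUtility

open Real

variable {γ : ℝ}

lemma hasDerivAt_mul_rpow_one_sub_div (K : ℝ) (hγ : γ ≠ 1) {x : ℝ} (hx : x ≠ 0) :
    HasDerivAt (fun y => K * y ^ (1 - γ) / (1 - γ)) (K * x ^ (-γ)) x := by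
  have h1γ : 1 - γ ≠ 0 := sub_ne_zero.2 hγ.symm
  refine (((hasDerivAt_rpow_const (Or.inl hx)).const_mul K).div_const (1 - γ)).congr_deriv ?_
  rw [sub_sub_cancel_left]
  field_simp

lemma deriv_deriv_mul_rpow_one_sub_div (K : ℝ) (hγ : γ ≠ 1) {x : ℝ} (hx : x ≠ 0) :
    deriv (deriv fun y => K * y ^ (1 - γ) / (1 - γ)) x = -γ * K * x ^ (-γ - 1) := by
  have hderiv : deriv (fun y => K * y ^ (1 - γ) / (1 - γ)) =ᶠ[nhds x] fun y => K * y ^ (-γ) := by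
    filter_upwards [compl_singleton_mem_nhds hx] with y hy
    exact (hasDerivAt_mul_rpow_one_sub_div K hγ hy).deriv
  rw [hderiv.deriv_eq, ((hasDerivAt_rpow_const (Or.inl hx)).const_mul K).deriv]
  ring

lemma mul_deriv_add_sq_mul_deriv_deriv (K : ℝ) (hγ : γ ≠ 1) {w : ℝ} (hw : 0 < w) (X Y : ℝ) :
    w * deriv (fun y => K * y ^ (1 - γ) / (1 - γ)) w * X
        + w ^ 2 / 2 * deriv (deriv fun y => K * y ^ (1 - γ) / (1 - γ)) w * Y
      = K * w ^ (1 - γ) * (X - γ / 2 * Y) := by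
  rw [(hasDerivAt_mul_rpow_one_sub_div K hγ hw.ne').deriv,
    deriv_deriv_mul_rpow_one_sub_div K hγ hw.ne']
  have h1 : w ^ (1 - γ) = w * w ^ (-γ) := by
    rw [sub_eq_add_neg, rpow_add hw, rpow_one]
  have h2 : w ^ (1 - γ) = w ^ 2 * w ^ (-γ - 1) := by
    rw [show 1 - γ = 2 + (-γ - 1) by ring, rpow_add hw, rpow_two]
  linear_combination (γ / 2 * K * Y) * h2 - (K * X) * h1

lemma exp_mul_rpow_neg_eq {β t F w : ℝ} (hγ : γ ≠ 0) (hF : 0 < F) (hw : 0 < w) :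
    exp (-β * t) * (exp (-(β / γ) * t) * w / F) ^ (-γ) = F ^ γ * w ^ (-γ) := by
  rw [div_rpow (by positivity) hF.le, mul_rpow (exp_pos _).le hw.le, ← exp_mul,
    rpow_neg hF.le, div_inv_eq_mul, ← mul_assoc, ← mul_assoc, ← exp_add]
  field_simp
  simp

end PowerUtility

section Bernoulli

open Real

variable {p : ℝ}

lemma one_add_mul_sub_one_lt_rpow {u : ℝ} (hp : p < 0) (hu : 0 < u) (hu1 : u ≠ 1) :
    1 + p * (u - 1) < u ^ p := by
  rcases le_or_gt (1 + p * (u - 1)) 0 with h | h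
  · exact h.trans_lt (rpow_pos_of_pos hu _)
  rw [rpow_def_of_pos hu, ← exp_log h, exp_lt_exp, mul_comm (log u)]
  calc log (1 + p * (u - 1)) ≤ p * (u - 1) := by linarith [log_le_sub_one_of_pos h]
    _ < p * log u := mul_lt_mul_of_neg_left (log_lt_sub_one_of_pos hu hu1) hp

lemma rpow_div_sub_one_div_lt {u : ℝ} (hp0 : p ≠ 0) (hp1 : p < 1) (hu : 0 < u) (hu1 : u ≠ 1) :
    u ^ p / p - 1 / p < u - 1 := by
  rw [← sub_div]
  rcases hp0.lt_or_gt with hp | hp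
  · rw [div_lt_iff_of_neg hp]
    linarith [one_add_mul_sub_one_lt_rpow hp hu hu1]
  · rw [div_lt_iff₀ hp]
    have := rpow_one_add_lt_one_add_mul_self (s := u - 1) (by linarith)
      (sub_ne_zero.2 hu1) hp hp1
    simp only [add_sub_cancel] at this
    linarith

lemma rpow_div_sub_mul_rpow_sub_one_lt {c c₀ : ℝ} (hp0 : p ≠ 0) (hp1 : p < 1) (hc : 0 < c)
    (hc₀ : 0 < c₀) (hne : c ≠ c₀) :
    c ^ p / p - c * c₀ ^ (p - 1) < c₀ ^ p / p - c₀ * c₀ ^ (p - 1) := by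
  have hu : c / c₀ ≠ 1 := fun h => hne ((div_eq_one_iff_eq hc₀.ne').1 h)
  have h := mul_lt_mul_of_pos_left (rpow_div_sub_one_div_lt hp0 hp1 (div_pos hc hc₀) hu)
    (rpow_pos_of_pos hc₀ p)
  have hc₀p : c₀ ^ p ≠ 0 := (rpow_pos_of_pos hc₀ p).ne'
  rw [div_rpow hc.le hc₀.le,
    show c₀ ^ p * (c ^ p / c₀ ^ p / p - 1 / p) = c ^ p / p - c₀ ^ p / p by field_simp,
    show c₀ ^ p * (c / c₀ - 1) = c * (c₀ ^ p / c₀) - c₀ ^ p by field_simp] at h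
  rw [rpow_sub_one hc₀.ne', mul_div_cancel₀ _ hc₀.ne']
  linarith

end Bernoulli

namespace Matrix

variable {n : Type*} [Fintype n] [DecidableEq n] {a : Matrix n n ℝ} {γ : ℝ}

lemma IsSymm.dotProduct_sub_mul_dotProduct_mulVec_eq (ha : a.IsSymm) (hdet : IsUnit a.det)
    (hγ : γ ≠ 0) (m x : n → ℝ) :
    x ⬝ᵥ m - γ / 2 * (x ⬝ᵥ a *ᵥ x)
      = m ⬝ᵥ a⁻¹ *ᵥ m / (2 * γ)
        - γ / 2 * ((x - (1 / γ) • a⁻¹ *ᵥ m) ⬝ᵥ a *ᵥ (x - (1 / γ) • a⁻¹ *ᵥ m)) := by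
  set y := a⁻¹ *ᵥ m
  have hay : a *ᵥ y = m := by rw [mulVec_mulVec, mul_nonsing_inv a hdet, one_mulVec]
  have hsymm : y ⬝ᵥ a *ᵥ x = x ⬝ᵥ m := by
    rw [dotProduct_mulVec, ← mulVec_transpose, ha.eq, dotProduct_comm, hay]
  simp only [mulVec_sub, mulVec_smul, hay, dotProduct_sub, sub_dotProduct, dotProduct_smul,
    smul_dotProduct, hsymm, smul_eq_mul, dotProduct_comm y m]
  field_simp
  ring

lemma PosDef.dotProduct_sub_mul_dotProduct_mulVec_eq (ha : a.PosDef) (hγ : γ ≠ 0)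
    (m x : n → ℝ) :
    x ⬝ᵥ m - γ / 2 * (x ⬝ᵥ a *ᵥ x)
      = m ⬝ᵥ a⁻¹ *ᵥ m / (2 * γ)
        - γ / 2 * ((x - (1 / γ) • a⁻¹ *ᵥ m) ⬝ᵥ a *ᵥ (x - (1 / γ) • a⁻¹ *ᵥ m)) :=
  (isHermitian_iff_isSymm.1 ha.isHermitian).dotProduct_sub_mul_dotProduct_mulVec_eq
    (isUnit_iff_ne_zero.2 ha.det_pos.ne') hγ m x

lemma PosDef.dotProduct_sub_mul_dotProduct_mulVec_smul_inv_mulVec (ha : a.PosDef) (hγ : γ ≠ 0)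
    (m : n → ℝ) :
    (1 / γ) • a⁻¹ *ᵥ m ⬝ᵥ m - γ / 2 * ((1 / γ) • a⁻¹ *ᵥ m ⬝ᵥ a *ᵥ ((1 / γ) • a⁻¹ *ᵥ m))
      = m ⬝ᵥ a⁻¹ *ᵥ m / (2 * γ) := by
  rw [ha.dotProduct_sub_mul_dotProduct_mulVec_eq hγ, sub_self, zero_dotProduct, mul_zero,
    sub_zero]

lemma PosDef.dotProduct_sub_mul_dotProduct_mulVec_lt (ha : a.PosDef) (hγ : 0 < γ) {m x : n → ℝ}
    (hx : x ≠ (1 / γ) • a⁻¹ *ᵥ m) :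
    x ⬝ᵥ m - γ / 2 * (x ⬝ᵥ a *ᵥ x) < m ⬝ᵥ a⁻¹ *ᵥ m / (2 * γ) := by
  have hpos := ha.dotProduct_mulVec_pos (sub_ne_zero.2 hx)
  rw [star_trivial] at hpos
  rw [ha.dotProduct_sub_mul_dotProduct_mulVec_eq hγ.ne']
  nlinarith

end Matrix

lemma merton_objective_lt {n : Type*} [Fintype n] [DecidableEq n] {a : Matrix n n ℝ}
    (ha : a.PosDef) {γ p A B c c₀ : ℝ} (hγ : 0 < γ) (hp0 : p ≠ 0) (hp1 : p < 1) (hA : 0 < A)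
    (hB : 0 < B) (hc : 0 < c) (hc₀ : 0 < c₀) {m x : n → ℝ}
    (hne : ¬(x = (1 / γ) • a⁻¹ *ᵥ m ∧ c = c₀)) :
    B * (x ⬝ᵥ m - γ / 2 * (x ⬝ᵥ a *ᵥ x)) + A * (c ^ p / p - c * c₀ ^ (p - 1))
      < B * (m ⬝ᵥ a⁻¹ *ᵥ m / (2 * γ)) + A * (c₀ ^ p / p - c₀ * c₀ ^ (p - 1)) := by
  by_cases hx : x = (1 / γ) • a⁻¹ *ᵥ m
  · rw [hx, ha.dotProduct_sub_mul_dotProduct_mulVec_smul_inv_mulVec hγ.ne']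
    have hC := rpow_div_sub_mul_rpow_sub_one_lt hp0 hp1 hc hc₀ fun h => hne ⟨hx, h⟩
    linarith [mul_lt_mul_of_pos_left hC hA]
  · have hC : c ^ p / p - c * c₀ ^ (p - 1) ≤ c₀ ^ p / p - c₀ * c₀ ^ (p - 1) := by
      rcases eq_or_ne c c₀ with rfl | h
      · rfl
      · exact (rpow_div_sub_mul_rpow_sub_one_lt hp0 hp1 hc hc₀ h).le
    linarith [mul_lt_mul_of_pos_left (ha.dotProduct_sub_mul_dotProduct_mulVec_lt hγ hx) hB,
      mul_le_mul_of_nonneg_left hC hA.le]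

/-- With `E = e^{-(β/γ)t}`, the first summand is `∂ₜv` by `hasDerivAt_mertonScale`. -/
lemma merton_hjb_residual_eq_zero {γ ν r M F E A w c₀ : ℝ} (hγ : γ ≠ 0) (hγ1 : γ ≠ 1)
    (hF : 0 < F) (hw : 0 < w) (hc₀ : 0 < c₀) (hν : ν = (1 - γ) * (r + 1 / (2 * γ) * M))
    (hA : A * c₀ ^ (-γ) = F ^ γ * w ^ (-γ)) (hc₀F : c₀ * F = E * w) :
    (-(ν / γ) * F - E) * γ * F ^ (γ - 1) * w ^ (1 - γ) / (1 - γ)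
      + (F ^ γ * w ^ (1 - γ) * r + (F ^ γ * w ^ (1 - γ) * (M / (2 * γ))
        + A * (c₀ ^ (1 - γ) / (1 - γ) - c₀ * c₀ ^ (1 - γ - 1)))) = 0 := by
  have h1γ : 1 - γ ≠ 0 := sub_ne_zero.2 hγ1.symm
  have hν' : 2 * γ * ν = (1 - γ) * (2 * γ * r + M) := by
    rw [hν]; field_simp
  have hw1 : w ^ (1 - γ) = w * w ^ (-γ) := by
    rw [sub_eq_add_neg, Real.rpow_add hw, Real.rpow_one]
  have hc₀1 : c₀ ^ (1 - γ) = c₀ * c₀ ^ (-γ) := by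
    rw [sub_eq_add_neg, Real.rpow_add hc₀, Real.rpow_one]
  rw [Real.rpow_sub_one hF.ne', sub_sub_cancel_left, hw1, hc₀1]
  field_simp
  linear_combination (2 * γ ^ 2 * F * c₀) * hA + (2 * γ ^ 2 * F ^ γ * w ^ (-γ)) * hc₀F
    - (F * F ^ γ * w * w ^ (-γ)) * hν'

theorem stmt7_general (γ β T : ℝ) (hγ : 0 < γ) (hγ1 : γ ≠ 1)
    (d : ℕ) (r : ℝ) (μ : Fin d → ℝ) (a : Matrix (Fin d) (Fin d) ℝ)
    (ha : a.PosDef) (ν : ℝ)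
    (hν : ν = (1 - γ) * (r + 1 / (2 * γ) *
      ((fun i => μ i - r) ⬝ᵥ a⁻¹.mulVec (fun i => μ i - r))))
    (hνβ : ν ≠ β)
    (f : ℝ → ℝ)
    (hf : ∀ t : ℝ, f t =
      Real.exp ((ν / γ) * (T - t)) +
        (γ / (ν - β)) * Real.exp (-(ν / γ) * t) *
          (Real.exp (((ν - β) / γ) * T) - Real.exp (((ν - β) / γ) * t)))
    (v : ℝ → ℝ → ℝ)
    (hv : ∀ t w : ℝ, v t w = f t ^ γ * w ^ (1 - γ) / (1 - γ))
    -- the Hamiltonian integrand, expressed with the partial derivatives of `v`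
    (H : ℝ → ℝ → (Fin d → ℝ) → ℝ → ℝ)
    (hH : ∀ t w : ℝ, ∀ π : Fin d → ℝ, ∀ c : ℝ, H t w π c =
      w * deriv (v t) w * (r + π ⬝ᵥ (fun i => μ i - r))
        + w ^ 2 / 2 * deriv (deriv (v t)) w * (π ⬝ᵥ a.mulVec π)
        - c * deriv (v t) w + Real.exp (-β * t) * c ^ (1 - γ) / (1 - γ))
    (πs : Fin d → ℝ) (hπs : πs = (1 / γ) • a⁻¹.mulVec (fun i => μ i - r))
    (cs : ℝ → ℝ → ℝ) (hcs : ∀ t w : ℝ, cs t w = Real.exp (-(β / γ) * t) * w / f t) :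
    (∀ w : ℝ, 0 < w → v T w = w ^ (1 - γ) / (1 - γ)) ∧
    ∀ t ∈ Set.Ico 0 T, ∀ w : ℝ, 0 < w →
      (0 = deriv (fun s => v s w) t + H t w πs (cs t w)) ∧
      (0 < cs t w) ∧
      (∀ π : Fin d → ℝ, ∀ c : ℝ, 0 < c → H t w π c ≤ H t w πs (cs t w)) ∧
      (∀ π : Fin d → ℝ, ∀ c : ℝ, 0 < c →
        H t w π c = H t w πs (cs t w) → π = πs ∧ c = cs t w) := by
  obtain rfl : f = mertonScale γ β T ν := funext hf
  subst hπs
  refine ⟨fun w _ => by rw [hv, mertonScale_self, Real.one_rpow, one_mul], fun t ht w hw => ?_⟩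
  set F := mertonScale γ β T ν t
  set m : Fin d → ℝ := fun i => μ i - r
  have hF : 0 < F := mertonScale_pos ht.2.le
  have hcs_pos : 0 < cs t w := by rw [hcs]; positivity
  have hmarginal : Real.exp (-β * t) * cs t w ^ (-γ) = F ^ γ * w ^ (-γ) := by
    rw [hcs]; exact exp_mul_rpow_neg_eq hγ.ne' hF hw
  have hH' : ∀ π c, H t w π c = F ^ γ * w ^ (1 - γ) * r
      + (F ^ γ * w ^ (1 - γ) * (π ⬝ᵥ m - γ / 2 * (π ⬝ᵥ a *ᵥ π))
        + Real.exp (-β * t) * (c ^ (1 - γ) / (1 - γ) - c * cs t w ^ (1 - γ - 1))) := by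
    intro π c
    rw [hH, show v t = fun y => F ^ γ * y ^ (1 - γ) / (1 - γ) from funext (hv t),
      mul_deriv_add_sq_mul_deriv_deriv _ hγ1 hw,
      (hasDerivAt_mul_rpow_one_sub_div _ hγ1 hw.ne').deriv, sub_sub_cancel_left, ← hmarginal]
    ring
  have hlt : ∀ π c, 0 < c → ¬(π = (1 / γ) • a⁻¹ *ᵥ m ∧ c = cs t w) →
      H t w π c < H t w ((1 / γ) • a⁻¹ *ᵥ m) (cs t w) := by
    intro π c hc hne
    rw [hH', hH', ha.dotProduct_sub_mul_dotProduct_mulVec_smul_inv_mulVec hγ.ne']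
    exact (add_lt_add_iff_left _).2 (merton_objective_lt ha hγ (sub_ne_zero.2 hγ1.symm)
      (by linarith) (Real.exp_pos _) (by positivity) hc hcs_pos hne)
  refine ⟨?_, hcs_pos, fun π c hc => ?_, fun π c hc heq => ?_⟩
  · rw [show (fun s => v s w) = fun s => mertonScale γ β T ν s ^ γ * w ^ (1 - γ) / (1 - γ)
        from funext fun s => hv s w,
      ((((hasDerivAt_mertonScale hγ.ne' hνβ t).rpow_const (Or.inl hF.ne')).mul_const _).div_const
        _).deriv, hH', ha.dotProduct_sub_mul_dotProduct_mulVec_smul_inv_mulVec hγ.ne']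
    exact (merton_hjb_residual_eq_zero hγ.ne' hγ1 hF hw hcs_pos hν hmarginal
      (by rw [hcs, div_mul_cancel₀ _ hF.ne'])).symm
  · by_cases h : π = (1 / γ) • a⁻¹ *ᵥ m ∧ c = cs t w
    · rw [h.1, h.2]
    · exact (hlt π c hc h).le
  · by_contra h
    exact (hlt π c hc h).ne heq

/-- unconstrained HJB in a first-order model.  With
`f(t;ν)` as in the paper, `ν = (1−γ)(r + (1/(2γ))(μ̃−r𝟙)ᵀã⁻¹(μ̃−r𝟙))`, `ν ≠ β`, and
`v(t,w) = f(t;ν)^γ·w^(1−γ)/(1−γ)`, one has `v(T,w) = w^(1−γ)/(1−γ)` and, for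
`(t,w) ∈ [0,T)×(0,∞)`, `0 = ∂ₜv + sup_{(π,c) ∈ ℝ^d×(0,∞)} H(π,c)`, where `H` is the
Hamiltonian; the supremum is attained at the unique maximizer
`π* = (1/γ)ã⁻¹(μ̃−r𝟙)`, `c* = e^{−(β/γ)t}·w/f(t;ν)`. -/
theorem stmt7 (γ β T : ℝ) (hγ : 0 < γ) (hγ1 : γ ≠ 1) (hβ : 0 < β) (hT : 0 < T)
    (d : ℕ) (hd : 1 ≤ d) (r : ℝ) (μ : Fin d → ℝ) (a : Matrix (Fin d) (Fin d) ℝ)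
    (ha : a.PosDef) (ν : ℝ)
    (hν : ν = (1 - γ) * (r + 1 / (2 * γ) *
      ((fun i => μ i - r) ⬝ᵥ a⁻¹.mulVec (fun i => μ i - r))))
    (hνβ : ν ≠ β)
    (f : ℝ → ℝ)
    (hf : ∀ t : ℝ, f t =
      Real.exp ((ν / γ) * (T - t)) +
        (γ / (ν - β)) * Real.exp (-(ν / γ) * t) *
          (Real.exp (((ν - β) / γ) * T) - Real.exp (((ν - β) / γ) * t)))
    (v : ℝ → ℝ → ℝ)
    (hv : ∀ t w : ℝ, v t w = f t ^ γ * w ^ (1 - γ) / (1 - γ))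
    -- the Hamiltonian integrand, expressed with the partial derivatives of `v`
    (H : ℝ → ℝ → (Fin d → ℝ) → ℝ → ℝ)
    (hH : ∀ t w : ℝ, ∀ π : Fin d → ℝ, ∀ c : ℝ, H t w π c =
      w * deriv (v t) w * (r + π ⬝ᵥ (fun i => μ i - r))
        + w ^ 2 / 2 * deriv (deriv (v t)) w * (π ⬝ᵥ a.mulVec π)
        - c * deriv (v t) w + Real.exp (-β * t) * c ^ (1 - γ) / (1 - γ))
    (πs : Fin d → ℝ) (hπs : πs = (1 / γ) • a⁻¹.mulVec (fun i => μ i - r))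
    (cs : ℝ → ℝ → ℝ) (hcs : ∀ t w : ℝ, cs t w = Real.exp (-(β / γ) * t) * w / f t) :
    (∀ w : ℝ, 0 < w → v T w = w ^ (1 - γ) / (1 - γ)) ∧
    ∀ t ∈ Set.Ico 0 T, ∀ w : ℝ, 0 < w →
      (0 = deriv (fun s => v s w) t + H t w πs (cs t w)) ∧
      (0 < cs t w) ∧
      (∀ π : Fin d → ℝ, ∀ c : ℝ, 0 < c → H t w π c ≤ H t w πs (cs t w)) ∧
      (∀ π : Fin d → ℝ, ∀ c : ℝ, 0 < c →
        H t w π c = H t w πs (cs t w) → π = πs ∧ c = cs t w) :=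
  stmt7_general γ β T hγ hγ1 d r μ a ha ν hν hνβ f hf v hv H hH πs hπs cs hcs
end
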